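/- arXiv:2511.00575 — 2 statements merged into one kernel-verified Lean document; each statement's English description precedes it below -/
import Mathlib

section
/- Let m and n be positive natural numbers with n ≤ m and n even. Then the complete bipartite graph K_{m,n} is Perrin cordial. -/
/-!
Modulo 2 the Perrin sequence is periodic from index 1 on, with period 7 and parity pattern
`1, 0, 0, 1, 0, 1, 1`; in particular indices `1, 2`, `3, 4` and `5, 6` of each period carry Perrin
numbers of opposite parity. Label the vertices `b = 0, …, n - 1` of the even side by the positive
integers not divisible by 7, in increasing order: then swapping `2j ↔ 2j + 1` flips the parity of
the Perrin number of the label. The induced involution of `K_{m,n}` maps edges of label 0 bijectively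
onto edges of label 1, so both counts agree. These labels stay below `m + n + 1` because `n ≤ m`,
and the remaining labels suffice for the other side.
-/

/-- The reindexed Perrin sequence: `P 0 = 0`, `P 1 = 3`, `P 2 = 0`, `P 3 = 2`,
and `P n = P (n-2) + P (n-3)` thereafter
(so `P 4 = 3`, `P 5 = 2`, `P 6 = 5`, ...). -/
def perrin : ℕ → ℕ
  | 0 => 0
  | 1 => 3
  | 2 => 0
  | 3 => 2
  | n + 4 => perrin (n + 2) + perrin (n + 1)

/-- The induced edge label: `f` assigns to each vertex the index of a Perrin number,
and an edge `uv` gets the label `(P (f u) + P (f v)) mod 2`. -/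
def perrinEdgeLabel {V : Type*} (f : V → ℕ) : Sym2 V → ℕ :=
  Sym2.lift ⟨fun u v => (perrin (f u) + perrin (f v)) % 2, fun u v => by simp [Nat.add_comm]⟩

/-- `eCount G f i` is the number of edges of `G` whose induced label under `f` is `i`. -/
noncomputable def eCount {V : Type*} (G : SimpleGraph V) (f : V → ℕ) (i : ℕ) : ℕ :=
  {e | e ∈ G.edgeSet ∧ perrinEdgeLabel f e = i}.ncard

/-- A finite simple graph `G` on `N` vertices is Perrin cordial if there is an injective
labeling of its vertices by indices in `{0, 1, ..., N}` such that the numbers of edges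
with induced label `0` and `1` differ by at most `1`. -/
def IsPerrinCordial {V : Type*} [Fintype V] (G : SimpleGraph V) : Prop :=
  ∃ f : V → Fin (Fintype.card V + 1), Function.Injective f ∧
    |(eCount G (fun v => (f v : ℕ)) 0 : ℤ) - (eCount G (fun v => (f v : ℕ)) 1 : ℤ)| ≤ 1

open Function

theorem perrinEdgeLabel_mk {V : Type*} (f : V → ℕ) (u v : V) :
    perrinEdgeLabel f s(u, v) = (perrin (f u) + perrin (f v)) % 2 :=
  rfl

theorem perrinEdgeLabel_lt_two {V : Type*} (f : V → ℕ) (e : Sym2 V) : perrinEdgeLabel f e < 2 := by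
  induction e using Sym2.ind with
  | _ u v => exact Nat.mod_lt _ two_pos

theorem eCount_zero_eq_eCount_one_of_involutive {V : Type*} {G : SimpleGraph V} {f : V → ℕ}
    {σ : V → V} (hσ : Involutive σ) (hadj : ∀ ⦃u v⦄, G.Adj u v → G.Adj (σ u) (σ v))
    (hflip : ∀ ⦃u v⦄, G.Adj u v → perrinEdgeLabel f s(σ u, σ v) ≠ perrinEdgeLabel f s(u, v)) :
    eCount G f 0 = eCount G f 1 := by
  have hmap : ∀ e ∈ G.edgeSet,
      e.map σ ∈ G.edgeSet ∧ perrinEdgeLabel f (e.map σ) ≠ perrinEdgeLabel f e := by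
    intro e he
    induction e using Sym2.ind with
    | _ u v => exact ⟨hadj he, hflip he⟩
  have himage : Sym2.map σ '' {e | e ∈ G.edgeSet ∧ perrinEdgeLabel f e = 0} =
      {e | e ∈ G.edgeSet ∧ perrinEdgeLabel f e = 1} := by
    ext e
    constructor
    · rintro ⟨e, ⟨he, hlabel⟩, rfl⟩
      obtain ⟨he', hne⟩ := hmap e he
      exact ⟨he', by have := perrinEdgeLabel_lt_two f (e.map σ); omega⟩
    · rintro ⟨he, hlabel⟩
      obtain ⟨he', hne⟩ := hmap e he
      refine ⟨e.map σ, ⟨he', by have := perrinEdgeLabel_lt_two f (e.map σ); omega⟩, ?_⟩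
      rw [Sym2.map_map, hσ.comp_self, Sym2.map_id, id]
  rw [eCount, eCount, ← himage, Set.ncard_image_of_injective _ (Sym2.map.injective hσ.injective)]

theorem completeBipartiteGraph_eCount_zero_eq_eCount_one {α β : Type*} {f : α ⊕ β → ℕ}
    {τ : β → β} (hτ : Involutive τ)
    (hflip : ∀ b, ¬perrin (f (.inr (τ b))) ≡ perrin (f (.inr b)) [MOD 2]) :
    eCount (completeBipartiteGraph α β) f 0 = eCount (completeBipartiteGraph α β) f 1 := by
  refine eCount_zero_eq_eCount_one_of_involutive (σ := Sum.map id τ) ?_ ?_ ?_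
  · rintro (a | b)
    · rfl
    · simp [hτ b]
  · rintro (a | b) (a' | b') h <;> simp_all
  · rintro (a | b) (a' | b') h
    · simp at h
    · have := hflip b'
      simp only [Sum.map_inl, Sum.map_inr, id, perrinEdgeLabel_mk, Nat.ModEq] at this ⊢
      omega
    · have := hflip b
      simp only [Sum.map_inl, Sum.map_inr, id, perrinEdgeLabel_mk, Nat.ModEq] at this ⊢
      omega
    · simp at h

theorem perrin_add_eight_modEq_two (k : ℕ) : perrin (k + 8) ≡ perrin (k + 1) [MOD 2] := by
  suffices h : ∀ k, perrin (k + 8) ≡ perrin (k + 1) [MOD 2] ∧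
      perrin (k + 9) ≡ perrin (k + 2) [MOD 2] ∧ perrin (k + 10) ≡ perrin (k + 3) [MOD 2] from
    (h k).1
  intro k
  induction k with
  | zero => decide
  | succ k ih =>
    obtain ⟨h8, h9, h10⟩ := ih
    refine ⟨h9, h10, ?_⟩
    show perrin (k + 7 + 4) ≡ perrin (k + 4) [MOD 2]
    rw [perrin, perrin]
    exact h9.add h8

theorem perrin_add_seven_mul_modEq_two (k q : ℕ) :
    perrin (k + 1 + 7 * q) ≡ perrin (k + 1) [MOD 2] := by
  induction q with
  | zero => rfl
  | succ q ih =>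
    rw [show k + 1 + 7 * (q + 1) = k + 7 * q + 8 by ring]
    refine (perrin_add_eight_modEq_two _).trans ?_
    rwa [show k + 7 * q + 1 = k + 1 + 7 * q by ring]

def skipMultiplesOfSeven (b : ℕ) : ℕ := b + b / 6 + 1

theorem skipMultiplesOfSeven_injective : Injective skipMultiplesOfSeven :=
  StrictMono.injective fun a b hab => by
    unfold skipMultiplesOfSeven
    have := Nat.div_le_div_right (c := 6) hab.le
    omega

theorem perrin_skipMultiplesOfSeven_modEq_two (b : ℕ) :
    perrin (skipMultiplesOfSeven b) ≡ perrin (b % 6 + 1) [MOD 2] := by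
  rw [show skipMultiplesOfSeven b = b % 6 + 1 + 7 * (b / 6) by unfold skipMultiplesOfSeven; omega]
  exact perrin_add_seven_mul_modEq_two _ _

def pairSwap (b : ℕ) : ℕ := if b % 2 = 0 then b + 1 else b - 1

theorem pairSwap_involutive : Involutive pairSwap := by
  intro b
  unfold pairSwap
  split_ifs <;> omega

theorem pairSwap_lt {n b : ℕ} (hn : Even n) (hb : b < n) : pairSwap b < n := by
  rw [Nat.even_iff] at hn
  unfold pairSwap
  split_ifs <;> omega

theorem pairSwap_mod_six (b : ℕ) : pairSwap b % 6 = pairSwap (b % 6) := by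
  unfold pairSwap
  split_ifs <;> omega

theorem perrin_skipMultiplesOfSeven_pairSwap (b : ℕ) :
    ¬perrin (skipMultiplesOfSeven (pairSwap b)) ≡ perrin (skipMultiplesOfSeven b) [MOD 2] := by
  have hperiod : ∀ r < 6, ¬perrin (pairSwap r + 1) ≡ perrin (r + 1) [MOD 2] := by decide
  intro h
  apply hperiod (b % 6) (Nat.mod_lt _ (by norm_num))
  rw [← pairSwap_mod_six]
  exact (perrin_skipMultiplesOfSeven_modEq_two _).symm.trans
    (h.trans (perrin_skipMultiplesOfSeven_modEq_two b))

theorem Function.Injective.exists_injective_sumElim {α β γ : Type*} [Fintype α] [Fintype β]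
    [Fintype γ] [DecidableEq γ] {g : β → γ} (hg : Injective g)
    (hcard : Fintype.card α + Fintype.card β ≤ Fintype.card γ) :
    ∃ e : α → γ, Injective (Sum.elim e g) := by
  have hcompl : Fintype.card α ≤ (Finset.univ.image g)ᶜ.card := by
    rw [Finset.card_compl, Finset.card_image_of_injective _ hg, Finset.card_univ]
    omega
  obtain ⟨e, he⟩ := Function.Embedding.exists_of_card_le_finset hcompl
  refine ⟨e, e.injective.sumElim hg fun a b hab => ?_⟩
  have := he ⟨a, rfl⟩
  simp [hab] at this

theorem completeBipartiteGraph_isPerrinCordial_of_even_general (m n : ℕ) (hnm : n ≤ m) (hne : Even n) :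
    IsPerrinCordial (completeBipartiteGraph (Fin m) (Fin n)) := by
  classical
  let labelB : Fin n → Fin (Fintype.card (Fin m ⊕ Fin n) + 1) := fun b =>
    ⟨skipMultiplesOfSeven b, by
      have := b.isLt
      simp only [Fintype.card_sum, Fintype.card_fin, skipMultiplesOfSeven]
      omega⟩
  have hlabelB : Injective labelB := fun a b h =>
    Fin.ext (skipMultiplesOfSeven_injective (Fin.val_eq_of_eq h))
  obtain ⟨labelA, hlabel⟩ := hlabelB.exists_injective_sumElim (α := Fin m) (by simp)
  refine ⟨Sum.elim labelA labelB, hlabel, ?_⟩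
  let τ : Fin n → Fin n := fun b => ⟨pairSwap b, pairSwap_lt hne b.isLt⟩
  have hτ : Involutive τ := fun b => Fin.ext (pairSwap_involutive b)
  rw [completeBipartiteGraph_eCount_zero_eq_eCount_one hτ
    fun b => perrin_skipMultiplesOfSeven_pairSwap b, sub_self, abs_zero]
  exact zero_le_one

/-- `K_{m,n}` with `1 ≤ n ≤ m` and `n` even is Perrin cordial. -/
theorem completeBipartiteGraph_isPerrinCordial_of_even (m n : ℕ) (hm : 0 < m) (hn : 0 < n)
    (hnm : n ≤ m) (hne : Even n) :
    IsPerrinCordial (completeBipartiteGraph (Fin m) (Fin n)) :=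
  completeBipartiteGraph_isPerrinCordial_of_even_general m n hnm hne
end

section
/- Let m and n be positive natural numbers with n odd and m even. The complete bipartite graph K_{m,n} is Perrin cordial if and only if m ≤ 6n + 26 and m ≠ 6n + 22. -/
/-!
A labeling of `K_{A,B}` splits each side into vertices with odd and with even Perrin value.
Writing `σ_A = ∑ (-1)^P(f a)` and `σ_B` likewise, the label sum of an edge is even exactly when
the signs of its ends agree, so `e(0) - e(1) = σ_A σ_B`. With `|A|` even and `|B|` odd, `σ_A` is
even and `σ_B` odd, so the labeling is cordial iff `σ_A = 0`, i.e. exactly half of `A` gets odd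
Perrin values. Since only one of the labels `0, …, m + n` is left out, such a labeling exists iff
the label range holds at least `m / 2` odd and at least `m / 2` even Perrin values. The reindexed
Perrin numbers are odd exactly at the positive indices `≡ 0, 1, 4, 6 (mod 7)`, which leaves a
linear arithmetic condition.
-/

open Finset

theorem perrin_add_eight_mod_two : ∀ k, perrin (k + 8) % 2 = perrin (k + 1) % 2
  | 0 | 1 | 2 => by decide
  | k + 3 => by
    have h1 := perrin_add_eight_mod_two (k + 1)
    have h2 := perrin_add_eight_mod_two k
    simp only [perrin] at *
    omega

theorem odd_perrin_succ_iff (k : ℕ) :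
    Odd (perrin (k + 1)) ↔
      (k + 1) % 7 = 0 ∨ (k + 1) % 7 = 1 ∨ (k + 1) % 7 = 4 ∨ (k + 1) % 7 = 6 := by
  induction k using Nat.strong_induction_on with
  | _ k ih =>
    rcases Nat.lt_or_ge k 7 with hk | hk
    · interval_cases k <;> decide
    · obtain ⟨j, rfl⟩ := Nat.exists_eq_add_of_le' hk
      rw [Nat.odd_iff, show j + 7 + 1 = j + 8 by rfl, perrin_add_eight_mod_two, ← Nat.odd_iff,
        ih j (by omega)]
      omega

theorem count_odd_perrin (N : ℕ) :
    Nat.count (fun k => Odd (perrin k)) (N + 1) =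
      N / 7 + (N + 6) / 7 + (N + 3) / 7 + (N + 1) / 7 := by
  -- the four terms count the indices in `[1, N]` that are `≡ 0, 1, 4, 6 (mod 7)`
  induction N with
  | zero => decide
  | succ N ih =>
    rw [Nat.count_succ, ih]
    by_cases h : Odd (perrin (N + 1))
    · have := (odd_perrin_succ_iff N).1 h
      rw [if_pos h]
      omega
    · have := mt (odd_perrin_succ_iff N).2 h
      rw [if_neg h]
      omega

theorem card_filter_fin_eq_count (p : ℕ → Prop) [DecidablePred p] (n : ℕ) :
    #{i : Fin n | p i} = Nat.count p n := by
  rw [Nat.count_eq_card_filter_range, ← Nat.Iio_eq_range, ← Fin.map_valEmbedding_univ,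
    filter_map, card_map]
  rfl

theorem sum_neg_one_pow_eq {ι : Type*} (s : Finset ι) (k : ι → ℕ) :
    ∑ x ∈ s, (-1 : ℤ) ^ k x = #{x ∈ s | Even (k x)} - #{x ∈ s | Odd (k x)} := by
  simp_rw [neg_one_pow_eq_ite, Finset.sum_ite, sum_const, Nat.not_even_iff_odd]
  simp [sub_eq_add_neg]

theorem sum_neg_one_pow_eq_card_sub {ι : Type*} (s : Finset ι) (k : ι → ℕ) :
    ∑ x ∈ s, (-1 : ℤ) ^ k x = #s - 2 * #{x ∈ s | Odd (k x)} := by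
  have := card_filter_add_card_filter_not (s := s) (p := fun x => Odd (k x))
  simp_rw [Nat.not_odd_iff_even] at this
  rw [sum_neg_one_pow_eq]
  omega

theorem eq_zero_of_even_of_odd_of_abs_mul_le_one {x y : ℤ} (hx : Even x) (hy : Odd y)
    (h : |x * y| ≤ 1) : x = 0 := by
  obtain ⟨r, rfl⟩ := hx
  by_contra hr
  have hr : 1 ≤ |r| := Int.one_le_abs (by rintro rfl; simp at hr)
  have hy : 1 ≤ |y| := Int.one_le_abs (by rintro rfl; simp at hy)
  rw [← two_mul, abs_mul, abs_mul, abs_two, mul_assoc] at h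
  linarith [one_le_mul_of_one_le_of_one_le hr hy]

theorem eCount_completeBipartiteGraph {A B : Type*} [Fintype A] [Fintype B] (g : A ⊕ B → ℕ)
    (i : ℕ) : eCount (completeBipartiteGraph A B) g i =
      #{x : A × B | (perrin (g (.inl x.1)) + perrin (g (.inr x.2))) % 2 = i} := by
  have hinj : Function.Injective fun x : A × B => s(Sum.inl x.1, Sum.inr x.2) := by
    rintro ⟨a, b⟩ ⟨a', b'⟩ h
    simpa using h
  have hset : {e | e ∈ (completeBipartiteGraph A B).edgeSet ∧ perrinEdgeLabel g e = i} =
      (fun x : A × B => s(Sum.inl x.1, Sum.inr x.2)) ''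
        {x | (perrin (g (.inl x.1)) + perrin (g (.inr x.2))) % 2 = i} := by
    rw [SimpleGraph.edgeSet_completeBipartiteGraph]
    ext e
    constructor
    · rintro ⟨⟨x, rfl⟩, hx⟩
      exact ⟨x, hx, rfl⟩
    · rintro ⟨x, hx, rfl⟩
      exact ⟨⟨x, rfl⟩, hx⟩
  rw [eCount, hset, Set.ncard_image_of_injective _ hinj, ← Set.ncard_coe_finset]
  simp

theorem eCount_zero_sub_eCount_one_completeBipartiteGraph {A B : Type*} [Fintype A] [Fintype B]
    (g : A ⊕ B → ℕ) :
    (eCount (completeBipartiteGraph A B) g 0 : ℤ) - eCount (completeBipartiteGraph A B) g 1 =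
      (∑ a, (-1 : ℤ) ^ perrin (g (.inl a))) * ∑ b, (-1 : ℤ) ^ perrin (g (.inr b)) := by
  rw [sum_mul_sum, ← Fintype.sum_prod_type', eCount_completeBipartiteGraph,
    eCount_completeBipartiteGraph]
  simp_rw [← pow_add, sum_neg_one_pow_eq, Nat.even_iff, Nat.odd_iff]

theorem isPerrinCordial_completeBipartiteGraph_iff_exists_injective {A B : Type*} [Fintype A]
    [Fintype B] (hA : Even (Fintype.card A)) (hB : Odd (Fintype.card B)) :
    IsPerrinCordial (completeBipartiteGraph A B) ↔
      ∃ f : A ⊕ B → Fin (Fintype.card (A ⊕ B) + 1), Function.Injective f ∧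
        #{a | Odd (perrin (f (.inl a)))} = Fintype.card A / 2 := by
  refine exists_congr fun f => and_congr_right fun _ => ?_
  rw [eCount_zero_sub_eCount_one_completeBipartiteGraph, sum_neg_one_pow_eq_card_sub,
    sum_neg_one_pow_eq_card_sub, card_univ, card_univ]
  have hcardA := Nat.two_mul_div_two_of_even hA
  constructor
  · intro h
    have := eq_zero_of_even_of_odd_of_abs_mul_le_one
      ((hA.natCast (α := ℤ)).sub (even_two_mul _))
      ((hB.natCast (R := ℤ)).sub_even (even_two_mul _)) h
    omega
  · intro h
    rw [h, ← Nat.cast_ofNat, ← Nat.cast_mul, hcardA]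
    simp

theorem card_filter_comp_le_of_injective {A L : Type*} [Fintype A] [Fintype L] {h : A → L}
    (hh : Function.Injective h) (Q : L → Prop) [DecidablePred Q] :
    #{a | Q (h a)} ≤ #{l | Q l} :=
  card_le_card_of_injOn h (fun a ha => by simpa using ha) hh.injOn

theorem exists_injective_card_filter_eq {A B L : Type*} [Fintype A] [Fintype B]
    [Fintype L] [DecidableEq L] (P : L → Prop) [DecidablePred P] {k : ℕ}
    (hP : k ≤ #{l | P l}) (hnP : Fintype.card A - k ≤ #{l | ¬P l}) (hk : k ≤ Fintype.card A)
    (hcard : Fintype.card A + Fintype.card B ≤ Fintype.card L) :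
    ∃ f : A ⊕ B → L, Function.Injective f ∧ #{a | P (f (.inl a))} = k := by
  -- `A` goes bijectively onto `k` labels satisfying `P` and `|A| - k` labels violating it,
  -- `B` injectively into the labels left over.
  obtain ⟨T₁, hT₁, hT₁card⟩ := exists_subset_card_eq hP
  obtain ⟨T₂, hT₂, hT₂card⟩ := exists_subset_card_eq hnP
  have hT₁P : ∀ l ∈ T₁, P l := fun l hl => (mem_filter.1 (hT₁ hl)).2
  have hT₂P : ∀ l ∈ T₂, ¬P l := fun l hl => (mem_filter.1 (hT₂ hl)).2
  set U := T₁ ∪ T₂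
  have hUcard : #U = Fintype.card A := by
    rw [card_union_of_disjoint (disjoint_left.2 fun l h₁ h₂ => hT₂P l h₂ (hT₁P l h₁))]
    omega
  let e : A ≃ U := Fintype.equivOfCardEq (by simp [hUcard])
  obtain ⟨g⟩ : Nonempty (B ↪ (Uᶜ : Finset L)) :=
    Function.Embedding.nonempty_of_card_le (by simp [hUcard]; omega)
  refine ⟨Sum.elim (fun a => e a) (fun b => g b), ?_, ?_⟩
  · refine Subtype.val_injective.comp e.injective |>.sumElim
      (Subtype.val_injective.comp g.injective) fun a b hab => ?_
    exact mem_compl.1 (g b).2 (hab ▸ (e a).2)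
  · rw [← hT₁card]
    refine card_bij (fun a _ => (e a : L)) (fun a ha => ?_)
      (fun a _ a' _ h => e.injective (Subtype.ext h))
      (fun l hl => ⟨e.symm ⟨l, mem_union_left _ hl⟩,
        mem_filter.2 ⟨mem_univ _, by simpa using hT₁P l hl⟩, by simp⟩)
    have hPa : P (e a) := (mem_filter.1 ha).2
    rcases mem_union.1 (e a).2 with h | h
    · exact h
    · exact absurd hPa (hT₂P _ h)

theorem exists_injective_card_filter_eq_iff {A B L : Type*} [Fintype A] [Fintype B]
    [Fintype L] [DecidableEq L] (P : L → Prop) [DecidablePred P] {k : ℕ}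
    (hk : k ≤ Fintype.card A) (hcard : Fintype.card A + Fintype.card B ≤ Fintype.card L) :
    (∃ f : A ⊕ B → L, Function.Injective f ∧ #{a | P (f (.inl a))} = k) ↔
      k ≤ #{l | P l} ∧ Fintype.card A - k ≤ #{l | ¬P l} := by
  refine ⟨?_, fun h => exists_injective_card_filter_eq P h.1 h.2 hk hcard⟩
  rintro ⟨f, hf, rfl⟩
  have hinj : Function.Injective (f ∘ .inl) := hf.comp Sum.inl_injective
  refine ⟨card_filter_comp_le_of_injective hinj P, ?_⟩
  have := card_filter_add_card_filter_not (s := univ) (p := fun a => P (f (.inl a)))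
  rw [card_univ] at this
  exact (Nat.sub_eq_of_eq_add' this.symm).trans_le
    (card_filter_comp_le_of_injective hinj fun l => ¬P l)

theorem half_le_count_odd_perrin_iff {m n : ℕ} (hm : Even m) (hn : Odd n) :
    m / 2 ≤ Nat.count (fun k => Odd (perrin k)) (m + n + 1) ∧
        m / 2 + Nat.count (fun k => Odd (perrin k)) (m + n + 1) ≤ m + n + 1 ↔
      m ≤ 6 * n + 26 ∧ m ≠ 6 * n + 22 := by
  rw [count_odd_perrin]
  rw [Nat.even_iff] at hm
  rw [Nat.odd_iff] at hn
  have : (m + n) % 7 < 7 := Nat.mod_lt _ (by norm_num)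
  -- Fixing the residue of `m + n` turns the four floors into linear terms.
  interval_cases h : (m + n) % 7 <;> omega

theorem completeBipartiteGraph_isPerrinCordial_iff_general (m n : ℕ) (hno : Odd n) (hme : Even m) :
    IsPerrinCordial (completeBipartiteGraph (Fin m) (Fin n)) ↔
      m ≤ 6 * n + 26 ∧ m ≠ 6 * n + 22 := by
  rw [isPerrinCordial_completeBipartiteGraph_iff_exists_injective (by simpa) (by simpa)]
  set N := Fintype.card (Fin m ⊕ Fin n) with hN
  let P (l : Fin (N + 1)) : Prop := Odd (perrin l)
  rw [exists_injective_card_filter_eq_iff P (Nat.div_le_self _ _) (by simp [hN]),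
    ← half_le_count_odd_perrin_iff hme hno]
  have hodd : #{l | P l} = Nat.count (fun k => Odd (perrin k)) (N + 1) :=
    card_filter_fin_eq_count (fun k => Odd (perrin k)) (N + 1)
  have hall : #{l | P l} + #{l | ¬P l} = N + 1 := by
    simpa using card_filter_add_card_filter_not (s := univ) (p := P)
  simp only [hN, Fintype.card_sum, Fintype.card_fin] at hodd hall ⊢
  have := Nat.even_iff.1 hme
  omega

/-- for `n` odd and `m` even (both positive), `K_{m,n}` is Perrin cordial
iff `m ≤ 6n + 26` and `m ≠ 6n + 22`. -/
theorem completeBipartiteGraph_isPerrinCordial_iff (m n : ℕ) (hm : 0 < m) (hn : 0 < n)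
    (hno : Odd n) (hme : Even m) :
    IsPerrinCordial (completeBipartiteGraph (Fin m) (Fin n)) ↔
      m ≤ 6 * n + 26 ∧ m ≠ 6 * n + 22 :=
  completeBipartiteGraph_isPerrinCordial_iff_general m n hno hme
end
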